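/- arXiv:1302.5624 — 5 statements merged into one kernel-verified Lean document; each statement's English description precedes it below -/
import Mathlib

section
/- Let S : X → Y be a measurable statistic. Then S is Bayes sufficient for the model indicator if and only if there exists a measurable function g : Y → ℝ^{M−1} such that g(S(x)) = T(x) for μ-almost every x. -/
open MeasureTheory

variable {X : Type*} [MeasurableSpace X]

/-- Posterior probability of model `i` given data `x`, under prior `p`:
`Pr_p(M_i | x) = p i * f i x / ∑ j, p j * f j x`. -/
noncomputable def post (M : ℕ) (f : Fin M → X → ℝ) (p : Fin M → ℝ) (i : Fin M) (x : X) : ℝ :=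
  p i * f i x / ∑ j, p j * f j x

/-- Marginal data distribution `μ_p = ∑ i, p i • μ_i` under prior `p`, where `μ_i` has
density `f i` with respect to `ν`. -/
noncomputable def marg (ν : Measure X) (M : ℕ) (f : Fin M → X → ℝ) (p : Fin M → ℝ) :
    Measure X :=
  ∑ i, ENNReal.ofReal (p i) • ν.withDensity (fun x => ENNReal.ofReal (f i x))

/-- The statistic `T(x) = (T_1(x), …, T_{M-1}(x))` with `T_i(x) = f i x / ∑ j, f j x`,
the posterior model probabilities under the uniform prior (first `M - 1` coordinates). -/
noncomputable def Tstat (M : ℕ) (f : Fin M → X → ℝ) (x : X) (i : Fin (M - 1)) : ℝ :=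
  f (Fin.castLE (Nat.sub_le M 1) i) x / ∑ j, f j x

/-- `p` is a prior over the `M` models. -/
def IsPrior (M : ℕ) (p : Fin M → ℝ) : Prop :=
  (∀ i, 0 ≤ p i) ∧ ∑ i, p i = 1

/-- `S` is Bayes sufficient for the model indicator: for every prior `p` and every model `i`,
the conditional expectation of `Pr_p(M_i | ·)` given `σ(S)` under `μ_p` equals
`Pr_p(M_i | ·)` `μ_p`-almost everywhere. -/
noncomputable def BayesSufficient (ν : Measure X) (M : ℕ) (f : Fin M → X → ℝ)
    {Y : Type*} [MeasurableSpace Y] (S : X → Y) : Prop :=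
  ∀ p : Fin M → ℝ, IsPrior M p → ∀ i : Fin M,
    (marg ν M f p)[post M f p i|MeasurableSpace.comap S inferInstance]
      =ᵐ[marg ν M f p] post M f p i

/-!
Bayes' rule is invariant under rescaling all likelihoods by a common positive factor, so every
posterior `Pr_p(M_i | x)` is a fixed measurable function of the uniform posterior vector, whose
last coordinate is `1 - ∑ k, T_k x`, at every `x` where some likelihood is positive, and the set where
all likelihoods vanish is `μ_p`-null. Hence if `T` factors through `S`, every posterior is
a.e. `σ(S)`-measurable and is its own conditional expectation. Conversely, Bayes sufficiency for
the uniform prior makes `T` a.e. equal to a `σ(S)`-measurable conditional expectation, which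
factors measurably through `S` by the Doob–Dynkin lemma.
-/

section Marginal

variable (ν : Measure X) {M : ℕ} (f : Fin M → X → ℝ)

lemma marg_apply (p : Fin M → ℝ) (A : Set X) :
    marg ν M f p A
      = ∑ i, ENNReal.ofReal (p i) * ν.withDensity (fun x => ENNReal.ofReal (f i x)) A := by
  simp [marg, Measure.finsetSum_apply]

lemma isFiniteMeasure_marg (hf : ∀ i, Integrable (f i) ν) (p : Fin M → ℝ) :
    IsFiniteMeasure (marg ν M f p) := by
  have := fun i => isFiniteMeasure_withDensity_ofReal (hf i).2
  have := fun i => (ν.withDensity fun x => ENNReal.ofReal (f i x)).smul_finite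
    (c := ENNReal.ofReal (p i)) ENNReal.ofReal_ne_top
  unfold marg
  infer_instance

lemma marg_absolutelyContinuous {p q : Fin M → ℝ} (hq : ∀ i, 0 < q i) :
    marg ν M f p ≪ marg ν M f q := by
  refine Measure.AbsolutelyContinuous.mk fun A _ hA => ?_
  rw [marg_apply, Finset.sum_eq_zero_iff] at hA
  rw [marg_apply]
  refine Finset.sum_eq_zero fun i hi => mul_eq_zero_of_right _ ?_
  exact (mul_eq_zero.1 (hA i hi)).resolve_left (by simpa using hq i)

lemma ae_marg_sum_pos (hf_meas : ∀ i, Measurable (f i)) (hf_nonneg : ∀ i x, 0 ≤ f i x)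
    (p : Fin M → ℝ) : ∀ᵐ x ∂marg ν M f p, 0 < ∑ j, f j x := by
  rw [ae_iff, marg_apply]
  refine Finset.sum_eq_zero fun i _ => mul_eq_zero_of_right _ ?_
  rw [withDensity_apply_eq_zero (hf_meas i).ennreal_ofReal]
  refine measure_mono_null (fun x ⟨hfi, hsum⟩ => ?_) measure_empty
  have hfi : 0 < f i x := by simpa using hfi
  exact hsum (hfi.trans_le (Finset.single_le_sum (fun j _ => hf_nonneg j x) (Finset.mem_univ i)))

end Marginal

section Posterior

variable {α : Type*} {M : ℕ} {f : Fin M → α → ℝ}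

lemma post_nonneg (hf : ∀ i x, 0 ≤ f i x) {p : Fin M → ℝ} (hp : ∀ i, 0 ≤ p i) (i : Fin M)
    (x : α) : 0 ≤ post M f p i x :=
  div_nonneg (mul_nonneg (hp i) (hf i x)) (Finset.sum_nonneg fun j _ => mul_nonneg (hp j) (hf j x))

lemma post_le_one (hf : ∀ i x, 0 ≤ f i x) {p : Fin M → ℝ} (hp : ∀ i, 0 ≤ p i) (i : Fin M)
    (x : α) : post M f p i x ≤ 1 :=
  div_le_one_of_le₀
    (Finset.single_le_sum (f := fun j => p j * f j x) (fun j _ => mul_nonneg (hp j) (hf j x))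
      (Finset.mem_univ i))
    (Finset.sum_nonneg fun j _ => mul_nonneg (hp j) (hf j x))

lemma post_const {c : ℝ} (hc : c ≠ 0) (i : Fin M) (x : α) :
    post M f (fun _ => c) i x = f i x / ∑ j, f j x := by
  rw [post, ← Finset.mul_sum, mul_div_mul_left _ _ hc]

lemma isPrior_uniform (hM : M ≠ 0) : IsPrior M fun _ => (M : ℝ)⁻¹ :=
  ⟨fun _ => by positivity, by simp [hM]⟩

variable [MeasurableSpace α]

lemma measurable_post (hf : ∀ i, Measurable (f i)) (p : Fin M → ℝ) (i : Fin M) :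
    Measurable (post M f p i) :=
  (measurable_const.mul (hf i)).div (Finset.measurable_sum _ fun j _ => measurable_const.mul (hf j))

lemma integrable_post {μ : Measure α} [IsFiniteMeasure μ] (hf_meas : ∀ i, Measurable (f i))
    (hf_nonneg : ∀ i x, 0 ≤ f i x) {p : Fin M → ℝ} (hp : ∀ i, 0 ≤ p i) (i : Fin M) :
    Integrable (post M f p i) μ :=
  (integrable_const (1 : ℝ)).mono' (measurable_post hf_meas p i).aestronglyMeasurable
    (.of_forall fun x => by
      rw [Real.norm_of_nonneg (post_nonneg hf_nonneg hp i x)]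
      exact post_le_one hf_nonneg hp i x)

end Posterior

def simplexCompletion {n : ℕ} (t : Fin n → ℝ) : Fin (n + 1) → ℝ :=
  Fin.snoc t (1 - ∑ k, t k)

lemma measurable_simplexCompletion_apply {n : ℕ} (j : Fin (n + 1)) :
    Measurable fun t : Fin n → ℝ => simplexCompletion t j := by
  induction j using Fin.lastCases with
  | last => simp only [simplexCompletion, Fin.snoc_last]; fun_prop
  | cast k => simp only [simplexCompletion, Fin.snoc_castSucc]; fun_prop

section Reconstruction

variable {α : Type*} {n : ℕ} {f : Fin (n + 1) → α → ℝ} {x : α}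

lemma simplexCompletion_Tstat (hs : ∑ j, f j x ≠ 0) :
    simplexCompletion (Tstat (n + 1) f x) = fun j => f j x / ∑ j, f j x := by
  funext j
  induction j using Fin.lastCases with
  | last =>
    have hsplit := Fin.sum_univ_castSucc fun j => f j x
    rw [simplexCompletion, Fin.snoc_last, eq_div_iff hs]
    change (1 - ∑ k : Fin n, f k.castSucc x / ∑ j, f j x) * _ = f (Fin.last n) x
    rw [← Finset.sum_div, sub_mul, div_mul_cancel₀ _ hs, hsplit]
    ring
  | cast k => rw [simplexCompletion, Fin.snoc_castSucc]; rfl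

lemma post_eq_post_simplexCompletion_Tstat (hs : ∑ j, f j x ≠ 0) (p : Fin (n + 1) → ℝ)
    (i : Fin (n + 1)) :
    post (n + 1) f p i x
      = post (n + 1) (fun j t => simplexCompletion t j) p i (Tstat (n + 1) f x) := by
  simp only [post, simplexCompletion_Tstat hs]
  simp_rw [← mul_div_assoc, ← Finset.sum_div]
  exact (div_div_div_cancel_right₀ hs _ _).symm

end Reconstruction

lemma exists_measurable_comp_ae_eq_of_condExp_comap {Y ι : Type*} [MeasurableSpace Y]
    [Countable ι] {μ : Measure X} {S : X → Y} {F : ι → X → ℝ}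
    (hF : ∀ i, μ[F i|MeasurableSpace.comap S inferInstance] =ᵐ[μ] F i) :
    ∃ g : Y → ι → ℝ, Measurable g ∧ ∀ᵐ x ∂μ, g (S x) = fun i => F i x := by
  obtain ⟨g, hg, hgS⟩ := Measurable.exists_eq_measurable_comp (f := S)
    (g := fun x i => μ[F i|MeasurableSpace.comap S inferInstance] x)
    (@measurable_pi_lambda _ _ _ (MeasurableSpace.comap S inferInstance) _ _ fun i =>
      stronglyMeasurable_condExp.measurable)
  refine ⟨g, hg, ?_⟩
  filter_upwards [ae_all_iff.2 hF] with x hx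
  rw [← Function.comp_apply (f := g), ← hgS]
  exact funext hx

theorem bayesSufficient_iff_factorization_general
    (ν : Measure X) (M : ℕ)
    (f : Fin M → X → ℝ) (hf_meas : ∀ i, Measurable (f i))
    (hf_nonneg : ∀ i x, 0 ≤ f i x) (hf_one : ∀ i, ∫ x, f i x ∂ν = 1)
    {Y : Type*} [MeasurableSpace Y] (S : X → Y) (hS : Measurable S) :
    BayesSufficient ν M f S ↔
      ∃ g : Y → Fin (M - 1) → ℝ, Measurable g ∧
        ∀ᵐ x ∂(marg ν M f fun _ => (M : ℝ)⁻¹), g (S x) = Tstat M f x := by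
  have hf_int i : Integrable (f i) ν := .of_integral_ne_zero (by simp [hf_one])
  constructor
  · intro hBS
    set u : Fin M → ℝ := fun _ => (M : ℝ)⁻¹
    have hM (i : Fin (M - 1)) : M ≠ 0 := by have := i.pos; omega
    obtain ⟨g, hg, hgS⟩ := exists_measurable_comp_ae_eq_of_condExp_comap fun i =>
      hBS u (isPrior_uniform (hM i)) (Fin.castLE (Nat.sub_le M 1) i)
    refine ⟨g, hg, hgS.mono fun x hx => hx.trans (funext fun i => ?_)⟩
    exact post_const (by simpa using hM i) _ x
  · rintro ⟨g, hg, hgT⟩ p hp i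
    obtain ⟨n, rfl⟩ := Nat.exists_eq_add_one_of_ne_zero i.pos.ne'
    have := isFiniteMeasure_marg ν f hf_int p
    set postT := post (n + 1) (fun j t => simplexCompletion t j) p i
    refine condExp_of_aestronglyMeasurable' hS.comap_le ⟨fun x => postT (g (S x)), ?_, ?_⟩
      (integrable_post hf_meas hf_nonneg hp.1 i)
    · exact ((measurable_post measurable_simplexCompletion_apply p i).comp
        (hg.comp (comap_measurable S))).stronglyMeasurable
    filter_upwards [ae_marg_sum_pos ν f hf_meas hf_nonneg p,
      (marg_absolutelyContinuous ν f fun _ => by positivity).ae_le hgT] with x hpos hx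
    rw [post_eq_post_simplexCompletion_Tstat hpos.ne' p i, ← hx]

/-- **Theorem 1 (Prangle et al.).** A measurable statistic `S : X → Y` is Bayes sufficient for
the model indicator if and only if there is a measurable `g : Y → ℝ^{M-1}` with
`g (S x) = T x` for `μ`-almost every `x`, where `μ` is the marginal under the uniform prior. -/
theorem bayesSufficient_iff_factorization
    (ν : Measure X) [SigmaFinite ν] (M : ℕ) (hM : 2 ≤ M)
    (f : Fin M → X → ℝ) (hf_meas : ∀ i, Measurable (f i))
    (hf_nonneg : ∀ i x, 0 ≤ f i x) (hf_one : ∀ i, ∫ x, f i x ∂ν = 1)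
    (hf_pos : ∀ᵐ x ∂ν, 0 < ∑ j, f j x)
    {Y : Type*} [MeasurableSpace Y] (S : X → Y) (hS : Measurable S) :
    BayesSufficient ν M f S ↔
      ∃ g : Y → Fin (M - 1) → ℝ, Measurable g ∧
        ∀ᵐ x ∂(marg ν M f fun _ => (M : ℝ)⁻¹), g (S x) = Tstat M f x :=
  bayesSufficient_iff_factorization_general ν M f hf_meas hf_nonneg hf_one S hS
end

section
/- Let S : X → Y be a measurable statistic that is Bayes sufficient for the model indicator. Then there exists a measurable function g : Y → ℝ^{M−1} such that g(S(x)) = T(x) for μ-almost every x. -/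
open MeasureTheory

variable {X : Type*} [MeasurableSpace X]

/-- Doob–Dynkin factorization for nonnegative real functions measurable with
respect to the σ-algebra generated by a statistic `S`. -/
lemma doob_dynkin_real {X Y : Type*} [MeasurableSpace X] [MeasurableSpace Y] (S : X → Y)
    (φ : X → ℝ) (hφ : Measurable[MeasurableSpace.comap S inferInstance] φ)
    (h0 : ∀ x, 0 ≤ φ x) :
    ∃ g : Y → ℝ, Measurable g ∧ ∀ x, g (S x) = φ x := by
  classical
  have hA : ∀ q : ℚ, ∃ B : Set Y, MeasurableSet B ∧ S ⁻¹' B = {x | φ x ≤ (q : ℝ)} := by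
    intro q
    have : MeasurableSet[MeasurableSpace.comap S inferInstance] {x | φ x ≤ (q : ℝ)} :=
      hφ measurableSet_Iic
    exact this
  choose B hBmeas hBpre using hA
  refine ⟨fun y => (⨅ q : ℚ, if y ∈ B q then ENNReal.ofReal q else ⊤).toReal, ?_, ?_⟩
  · apply Measurable.ennreal_toReal
    exact Measurable.iInf fun q => Measurable.ite (hBmeas q) measurable_const measurable_const
  · intro x
    have hmem : ∀ q : ℚ, S x ∈ B q ↔ φ x ≤ (q : ℝ) := by
      intro q
      constructor
      · intro h; have := hBpre q ▸ (show x ∈ S ⁻¹' B q from h); exact this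
      · intro h; have : x ∈ S ⁻¹' B q := by rw [hBpre q]; exact h
        exact this
    have key : (⨅ q : ℚ, if S x ∈ B q then ENNReal.ofReal q else ⊤) = ENNReal.ofReal (φ x) := by
      apply le_antisymm
      · refine ENNReal.le_of_forall_pos_le_add fun ε hε _ => ?_
        obtain ⟨q, hq1, hq2⟩ := exists_rat_btwn (show φ x < φ x + (ε : ℝ) by
          have : (0:ℝ) < ε := by exact_mod_cast hε
          linarith)
        refine le_trans (iInf_le _ q) ?_
        rw [if_pos ((hmem q).2 hq1.le)]
        calc ENNReal.ofReal q ≤ ENNReal.ofReal (φ x + (ε : ℝ)) :=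
              ENNReal.ofReal_le_ofReal hq2.le
          _ = ENNReal.ofReal (φ x) + ENNReal.ofReal (ε : ℝ) :=
              ENNReal.ofReal_add (h0 x) (by positivity)
          _ = ENNReal.ofReal (φ x) + ε := by rw [ENNReal.ofReal_coe_nnreal]
      · refine le_iInf fun q => ?_
        by_cases h : S x ∈ B q
        · rw [if_pos h]; exact ENNReal.ofReal_le_ofReal ((hmem q).1 h)
        · rw [if_neg h]; exact le_top
    simp only []
    rw [key, ENNReal.toReal_ofReal (h0 x)]

/-- If `S` is Bayes sufficient for the model indicator, then there is a measurable
`g : Y → ℝ^{M-1}` with `g (S x) = T x` for `μ`-almost every `x`, where `μ` is the marginal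
under the uniform prior. -/
theorem factorization_of_bayesSufficient
    (ν : Measure X) [SigmaFinite ν] (M : ℕ) (hM : 2 ≤ M)
    (f : Fin M → X → ℝ) (hf_meas : ∀ i, Measurable (f i))
    (hf_nonneg : ∀ i x, 0 ≤ f i x) (hf_one : ∀ i, ∫ x, f i x ∂ν = 1)
    (hf_pos : ∀ᵐ x ∂ν, 0 < ∑ j, f j x)
    {Y : Type*} [MeasurableSpace Y] (S : X → Y) (hS : Measurable S)
    (hsuff : BayesSufficient ν M f S) :
    ∃ g : Y → Fin (M - 1) → ℝ, Measurable g ∧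
      ∀ᵐ x ∂(marg ν M f fun _ => (M : ℝ)⁻¹), g (S x) = Tstat M f x := by
  classical
  set p : Fin M → ℝ := fun _ => (M : ℝ)⁻¹ with hp_def
  have hMpos : (0:ℝ) < M := by
    have : 0 < M := lt_of_lt_of_le (by norm_num) hM
    exact_mod_cast this
  have hMne : ((M : ℝ))⁻¹ ≠ 0 := inv_ne_zero (ne_of_gt hMpos)
  have hp : IsPrior M p := by
    constructor
    · intro i; simp only [p]; positivity
    · simp only [p, Finset.sum_const, Finset.card_univ, Fintype.card_fin, nsmul_eq_mul]
      field_simp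
  have hpost : ∀ (i : Fin M) x, post M f p i x = f i x / ∑ j, f j x := by
    intro i x
    unfold post
    simp only [p]
    rw [← Finset.mul_sum]
    exact mul_div_mul_left _ _ hMne
  have hsum_nonneg : ∀ x, (0:ℝ) ≤ ∑ j, f j x :=
    fun x => Finset.sum_nonneg fun j _ => hf_nonneg j x
  have hbound : ∀ (i : Fin M) x, 0 ≤ post M f p i x ∧ post M f p i x ≤ 1 := by
    intro i x
    rw [hpost]
    refine ⟨div_nonneg (hf_nonneg i x) (hsum_nonneg x), ?_⟩
    exact div_le_one_of_le₀
      (Finset.single_le_sum (fun j _ => hf_nonneg j x) (Finset.mem_univ i)) (hsum_nonneg x)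
  set μp := marg ν M f p with hμp_def
  have hfac : ∀ i : Fin (M-1), ∃ g : Y → ℝ, Measurable g ∧
      ∀ᵐ x ∂μp, g (S x) = Tstat M f x i := by
    intro i
    set i' := Fin.castLE (Nat.sub_le M 1) i with hi'
    have hce := hsuff p hp i'
    set φ := μp[post M f p i'|MeasurableSpace.comap S inferInstance] with hφdef
    have hφm : Measurable[MeasurableSpace.comap S inferInstance] φ := stronglyMeasurable_condExp.measurable
    set φ' : X → ℝ := fun x => max 0 (min (φ x) 1) with hφ'
    have hφ'm : Measurable[MeasurableSpace.comap S inferInstance] φ' :=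
      Measurable.max measurable_const (Measurable.min hφm measurable_const)
    obtain ⟨g, hg, hgS⟩ := doob_dynkin_real S φ' hφ'm (fun x => le_max_left _ _)
    refine ⟨g, hg, ?_⟩
    filter_upwards [hce] with x hx
    have hx' : φ x = post M f p i' x := hx
    have hφ'x : φ' x = post M f p i' x := by
      obtain ⟨h0, h1⟩ := hbound i' x
      simp only [φ', hx', min_eq_left h1, max_eq_right h0]
    rw [hgS x, hφ'x, hpost]
    rfl
  choose g hgm hgae using hfac
  refine ⟨fun y i => g i y, measurable_pi_lambda _ fun i => hgm i, ?_⟩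
  have hall : ∀ᵐ x ∂μp, ∀ i, g i (S x) = Tstat M f x i := ae_all_iff.2 hgae
  filter_upwards [hall] with x hx
  funext i
  exact hx i
end

section
/- Let S : X → Y be a measurable statistic. If for the uniform prior u = (1/M, …, 1/M) and every i ∈ {1, …, M} the conditional expectation of T_i(·) = Pr_u(M_i | ·) given σ(S) under μ equals T_i(·) μ-almost everywhere, then the same holds for every prior: for every prior p and every i, the conditional expectation of Pr_p(M_i | ·) given σ(S) under μ_p equals Pr_p(M_i | ·) μ_p-almost everywhere. That is, to verify Bayes sufficiency of S for the model indicator it suffices to verify it under the uniform prior. -/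
open MeasureTheory

variable {X : Type*} [MeasurableSpace X]

/-- To verify Bayes sufficiency of `S` for the model indicator it suffices to verify it
under the uniform prior `u = (1/M, …, 1/M)`: if for every `i` the conditional expectation of
`T_i = Pr_u(M_i | ·)` given `σ(S)` under `μ = μ_u` equals `T_i` `μ`-a.e., then for every
prior `p` and every `i` the conditional expectation of `Pr_p(M_i | ·)` given `σ(S)` under
`μ_p` equals `Pr_p(M_i | ·)` `μ_p`-a.e. -/
theorem bayesSufficient_of_uniform_prior
    (ν : Measure X) [SigmaFinite ν] (M : ℕ) (hM : 2 ≤ M)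
    (f : Fin M → X → ℝ) (hf_meas : ∀ i, Measurable (f i))
    (hf_nonneg : ∀ i x, 0 ≤ f i x) (hf_one : ∀ i, ∫ x, f i x ∂ν = 1)
    (hf_pos : ∀ᵐ x ∂ν, 0 < ∑ j, f j x)
    {Y : Type*} [MeasurableSpace Y] (S : X → Y) (hS : Measurable S)
    (huniform : ∀ i : Fin M,
      (marg ν M f fun _ => (M : ℝ)⁻¹)[post M f (fun _ => (M : ℝ)⁻¹) i|
          MeasurableSpace.comap S inferInstance]
        =ᵐ[marg ν M f fun _ => (M : ℝ)⁻¹] post M f (fun _ => (M : ℝ)⁻¹) i) :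
    BayesSufficient ν M f S := by
  classical
  intro p hp i
  have hMinv_ne : ((M:ℝ))⁻¹ ≠ 0 := by positivity
  have hm : MeasurableSpace.comap S inferInstance ≤ _ := hS.comap_le
  set u : Fin M → ℝ := fun _ => (M : ℝ)⁻¹ with hu
  -- integrability of the densities
  have hfi : ∀ j, Integrable (f j) ν := by
    intro j
    by_contra hcon
    have := hf_one j
    rw [integral_undef hcon] at this
    exact one_ne_zero this.symm
  -- marginal measures applied to sets
  have hmargA : ∀ (q : Fin M → ℝ) (A : Set X),
      marg ν M f q A = ∑ j, ENNReal.ofReal (q j) *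
        ν.withDensity (fun x => ENNReal.ofReal (f j x)) A := by
    intro q A
    rw [marg, Measure.finset_sum_apply]
    simp [Measure.smul_apply, smul_eq_mul]
  -- absolute continuity wrt ν
  have hac_ν : ∀ q : Fin M → ℝ, marg ν M f q ≪ ν := by
    intro q A hA
    rw [hmargA]
    refine Finset.sum_eq_zero fun j _ => ?_
    rw [withDensity_absolutelyContinuous ν _ hA, mul_zero]
  -- absolute continuity of marg p wrt marg u
  have hac_u : marg ν M f p ≪ marg ν M f u := by
    intro A hA
    rw [hmargA] at hA ⊢
    have hzero : ∀ j, ν.withDensity (fun x => ENNReal.ofReal (f j x)) A = 0 := by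
      intro j
      have h0 := (Finset.sum_eq_zero_iff.mp hA) j (Finset.mem_univ j)
      have hne : ENNReal.ofReal (u j) ≠ 0 := by
        rw [hu]
        refine ne_of_gt (ENNReal.ofReal_pos.mpr ?_)
        positivity
      exact (mul_eq_zero.mp h0).resolve_left hne
    refine Finset.sum_eq_zero fun j _ => ?_
    rw [hzero j, mul_zero]
  -- marg of a prior is a probability measure
  have hν_univ : ∀ j, ν.withDensity (fun x => ENNReal.ofReal (f j x)) Set.univ = 1 := by
    intro j
    rw [withDensity_apply _ MeasurableSet.univ, setLIntegral_univ,
      ← ofReal_integral_eq_lintegral_ofReal (hfi j) (ae_of_all _ (hf_nonneg j)), hf_one j,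
      ENNReal.ofReal_one]
  have hprob : ∀ q : Fin M → ℝ, IsPrior M q → IsProbabilityMeasure (marg ν M f q) := by
    intro q hq
    constructor
    rw [hmargA]
    simp only [hν_univ, mul_one]
    rw [← ENNReal.ofReal_sum_of_nonneg (fun j _ => hq.1 j), hq.2, ENNReal.ofReal_one]
  have hprior_u : IsPrior M u := by
    constructor
    · intro j; rw [hu]; positivity
    · rw [hu]
      simp only [Finset.sum_const, Finset.card_univ, Fintype.card_fin, nsmul_eq_mul]
      field_simp
  haveI : IsProbabilityMeasure (marg ν M f p) := hprob p hp
  haveI : IsProbabilityMeasure (marg ν M f u) := hprob u hprior_u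
  -- post is bounded in [0,1]
  have hpost_bdd : ∀ (q : Fin M → ℝ), (∀ j, 0 ≤ q j) →
      ∀ (k : Fin M) (x : X), post M f q k x ∈ Set.Icc (0:ℝ) 1 := by
    intro q hq k x
    have hnum : 0 ≤ q k * f k x := mul_nonneg (hq k) (hf_nonneg k x)
    have hden : 0 ≤ ∑ j, q j * f j x :=
      Finset.sum_nonneg fun j _ => mul_nonneg (hq j) (hf_nonneg j x)
    have hle : q k * f k x ≤ ∑ j, q j * f j x :=
      Finset.single_le_sum (fun j _ => mul_nonneg (hq j) (hf_nonneg j x)) (Finset.mem_univ k)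
    rcases eq_or_lt_of_le hden with hden0 | hdenpos
    · simp [post, ← hden0]
    · exact ⟨div_nonneg hnum hden, (div_le_one hdenpos).mpr hle⟩
  have hpost_meas : ∀ (q : Fin M → ℝ) (k : Fin M), Measurable (post M f q k) := by
    intro q k
    exact (measurable_const.mul (hf_meas k)).div
      (Finset.measurable_sum _ fun j _ => measurable_const.mul (hf_meas j))
  have hpost_int : Integrable (post M f p i) (marg ν M f p) := by
    refine ⟨(hpost_meas p i).aestronglyMeasurable, ?_⟩
    refine MeasureTheory.HasFiniteIntegral.of_bounded (C := 1) (ae_of_all _ fun x => ?_)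
    have hb := hpost_bdd p hp.1 i x
    rw [Real.norm_eq_abs, abs_le]
    exact ⟨le_trans (by norm_num) hb.1, hb.2⟩
  -- the conditional expectations under the uniform prior
  set g : Fin M → X → ℝ := fun j =>
    (marg ν M f u)[post M f u j | MeasurableSpace.comap S inferInstance] with hg_def
  have hg_meas : ∀ j, Measurable[MeasurableSpace.comap S inferInstance] (g j) :=
    fun j => stronglyMeasurable_condExp.measurable
  -- the candidate σ(S)-measurable version of post p i
  set h : X → ℝ := fun x => p i * g i x / ∑ j, p j * g j x with hh_def
  have hh_meas : Measurable[MeasurableSpace.comap S inferInstance] h :=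
    Measurable.div (Measurable.mul measurable_const (hg_meas i))
      (Finset.measurable_sum _ fun j _ => Measurable.mul measurable_const (hg_meas j))
  -- a.e. equality post p i = h under marg p
  have heq : post M f p i =ᵐ[marg ν M f p] h := by
    have e1 : ∀ᵐ x ∂(marg ν M f u), ∀ j, post M f u j x = g j x :=
      MeasureTheory.ae_all_iff.mpr fun j => (huniform j).symm
    have e1' : ∀ᵐ x ∂(marg ν M f p), ∀ j, post M f u j x = g j x := hac_u.ae_le e1
    have e2 : ∀ᵐ x ∂(marg ν M f p), 0 < ∑ j, f j x := (hac_ν p).ae_le hf_pos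
    filter_upwards [e1', e2] with x hx hs
    have hsne : (∑ k, f k x) ≠ 0 := ne_of_gt hs
    have hT : ∀ j, g j x = f j x / ∑ k, f k x := by
      intro j
      rw [← hx j, post, hu, ← Finset.mul_sum]
      exact mul_div_mul_left _ _ hMinv_ne
    have key : ∀ (a b s : ℝ), s ≠ 0 → a / s / (b / s) = a / b := by
      intro a b s hsne'
      rcases eq_or_ne b 0 with hb | hb
      · simp [hb]
      · field_simp
    have hterm : ∀ j : Fin M, p j * (f j x / ∑ k, f k x) = p j * f j x / ∑ k, f k x :=
      fun j => (mul_div_assoc _ _ _).symm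
    rw [hh_def]
    simp only [hT, hterm, ← Finset.sum_div, post]
    rw [key _ _ _ hsne]
  -- conclude via conditional expectation of an m-measurable function
  have hh_int : Integrable h (marg ν M f p) := hpost_int.congr heq
  calc (marg ν M f p)[post M f p i | MeasurableSpace.comap S inferInstance]
      =ᵐ[marg ν M f p] (marg ν M f p)[h | MeasurableSpace.comap S inferInstance] :=
        condExp_congr_ae heq
    _ = h := condExp_of_stronglyMeasurable hm hh_meas.stronglyMeasurable hh_int
    _ =ᵐ[marg ν M f p] post M f p i := heq.symm
end

section
/- Consider two models with joint densities π_1, π_2 on Θ × X, measurable training regions R_1, R_2 ⊆ Θ with Pr(θ ∈ R_i | 𝓜_i) > 0, and the corresponding truncated models with joint densities π'_i(θ, x) = π_i(θ, x) 1_{R_i}(θ) / Pr(θ ∈ R_i | 𝓜_i). Fix x ∈ X such that for i = 1, 2 the marginal densities π_i(x) = ∫_Θ π_i(θ, x) dλ(θ) are finite and strictly positive and Pr(θ ∈ R_i | x, 𝓜_i) = (∫_{R_i} π_i(θ, x) dλ(θ)) / π_i(x) > 0. Then the Bayes factor between the original models satisfies B_{12}(x) := π_1(x)/π_2(x) = (r_1/r_2)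 · (π'_1(x)/π'_2(x)), where r_i = Pr(θ ∈ R_i | 𝓜_i) / Pr(θ ∈ R_i | x, 𝓜_i) and π'_i(x) = ∫_Θ π'_i(θ, x) dλ(θ). -/
open MeasureTheory

variable {Θ X : Type*} [MeasurableSpace Θ] [MeasurableSpace X]

/-- Parameter prior probability of a region `R` under a model with joint density `π` on
`Θ × X`: `Pr(θ ∈ R) = ∫_R ∫_X π(θ, x) dν(x) dλ(θ)`. -/
noncomputable def priorProb (lam : Measure Θ) (ν : Measure X) (π : Θ × X → ℝ)
    (R : Set Θ) : ℝ :=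
  ∫ t in R, ∫ y, π (t, y) ∂ν ∂lam

/-- Joint density of the truncated model:
`π'(θ, x) = π(θ, x) 1_R(θ) / Pr(θ ∈ R)`. -/
noncomputable def truncDensity (lam : Measure Θ) (ν : Measure X) (π : Θ × X → ℝ)
    (R : Set Θ) (tx : Θ × X) : ℝ :=
  π tx * R.indicator (fun _ => (1 : ℝ)) tx.1 / priorProb lam ν π R

/-- Marginal density (evidence) of the data `x`: `π(x) = ∫_Θ π(θ, x) dλ(θ)`. -/
noncomputable def margDensity (lam : Measure Θ) (π : Θ × X → ℝ) (x : X) : ℝ :=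
  ∫ t, π (t, x) ∂lam

/-- Posterior probability of the region `R` given data `x`:
`Pr(θ ∈ R | x) = (∫_R π(θ, x) dλ(θ)) / π(x)`. -/
noncomputable def postRegionProb (lam : Measure Θ) (π : Θ × X → ℝ) (R : Set Θ)
    (x : X) : ℝ :=
  (∫ t in R, π (t, x) ∂lam) / margDensity lam π x

/-- **Truncation correction for Bayes factors.** For two models with training regions
`R₁, R₂`, the Bayes factor between the original models equals `(r₁ / r₂)` times the Bayes
factor between the truncated models, where `rᵢ = Pr(θ ∈ Rᵢ | 𝓜ᵢ) / Pr(θ ∈ Rᵢ | x, 𝓜ᵢ)`. -/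
theorem bayesFactor_eq_trunc_correction
    (lam : Measure Θ) (ν : Measure X) [SigmaFinite lam] [SigmaFinite ν]
    (π₁ π₂ : Θ × X → ℝ)
    (hπ₁_meas : Measurable π₁) (hπ₁_nonneg : ∀ tx, 0 ≤ π₁ tx)
    (hπ₁_one : ∫ tx, π₁ tx ∂(lam.prod ν) = 1)
    (hπ₂_meas : Measurable π₂) (hπ₂_nonneg : ∀ tx, 0 ≤ π₂ tx)
    (hπ₂_one : ∫ tx, π₂ tx ∂(lam.prod ν) = 1)
    (R₁ R₂ : Set Θ) (hR₁ : MeasurableSet R₁) (hR₂ : MeasurableSet R₂)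
    (hR₁prior : 0 < priorProb lam ν π₁ R₁) (hR₂prior : 0 < priorProb lam ν π₂ R₂)
    (x : X)
    (hint₁ : Integrable (fun t => π₁ (t, x)) lam)
    (hint₂ : Integrable (fun t => π₂ (t, x)) lam)
    (hpos₁ : 0 < margDensity lam π₁ x) (hpos₂ : 0 < margDensity lam π₂ x)
    (hcond₁ : 0 < postRegionProb lam π₁ R₁ x) (hcond₂ : 0 < postRegionProb lam π₂ R₂ x) :
    margDensity lam π₁ x / margDensity lam π₂ x =
      ((priorProb lam ν π₁ R₁ / postRegionProb lam π₁ R₁ x) /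
          (priorProb lam ν π₂ R₂ / postRegionProb lam π₂ R₂ x)) *
        ((∫ t, truncDensity lam ν π₁ R₁ (t, x) ∂lam) /
          ∫ t, truncDensity lam ν π₂ R₂ (t, x) ∂lam) := by

  have key : ∀ (π : Θ × X → ℝ) (R : Set Θ), MeasurableSet R →
      (∫ t, truncDensity lam ν π R (t, x) ∂lam) =
        (∫ t in R, π (t, x) ∂lam) / priorProb lam ν π R := by
    intro π R hR
    unfold truncDensity
    rw [integral_div]
    congr 1
    rw [← integral_indicator hR]
    congr 1
    ext t
    by_cases ht : t ∈ R <;> simp [ht]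
  rw [key π₁ R₁ hR₁, key π₂ R₂ hR₂]
  unfold postRegionProb at *
  have h1 : (∫ t in R₁, π₁ (t, x) ∂lam) ≠ 0 := by
    intro h; rw [h] at hcond₁; simp at hcond₁
  have h2 : (∫ t in R₂, π₂ (t, x) ∂lam) ≠ 0 := by
    intro h; rw [h] at hcond₂; simp at hcond₂
  field_simp
end

section
/- Suppose the summary statistic takes values in ℝ^d and that under model i the summary has a density g_i : ℝ^d → [0, ∞) with respect to Lebesgue measure, with each g_i continuous at the observed value s_0 ∈ ℝ^d. Fix a prior p = (p_1, …, p_M) with Σ_{j=1}^M p_j g_j(s_0) > 0. For h > 0 define the ABC posterior model weight p_ABC,h(𝓜_i) = p_i ∫_{B(s_0, h)} g_i(s) ds / Σ_{j=1}^M p_j ∫_{B(s_0, h)} g_j(s) ds, where B(s_0, h) is the closed Euclidean ball of radius h about s_0 (so the denominator is positive for all sufficiently small h > 0). Then as h → 0⁺, p_ABC,h(𝓜_i) converges to p_i g_i(s_0) / Σ_{j=1}^M p_j g_j(s_0), the exact posterior probability Pr(𝓜_i | S = s_0), for each i. -/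
open MeasureTheory Filter Topology Metric

/-! Dividing the numerator and the denominator of the ABC weight by the volume of `B(s₀, h)`
turns every integral into an average of `g j` over a shrinking ball, and the average of a
function over sets shrinking to a point of continuity converges to its value there. -/

theorem ContinuousAt.tendsto_setAverage {X E ι : Type*} [TopologicalSpace X]
    [MeasurableSpace X] [OpensMeasurableSpace X]
    [NormedAddCommGroup E] [NormedSpace ℝ E] [CompleteSpace E]
    {μ : Measure X} [IsLocallyFiniteMeasure μ] {x : X} {f : X → E}
    (hf : ContinuousAt f x) (hfm : StronglyMeasurableAtFilter f (𝓝 x) μ)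
    {s : ι → Set X} {l : Filter ι} (hs : Tendsto s l (𝓝 x).smallSets)
    (hs₀ : ∀ᶠ i in l, μ (s i) ≠ 0) :
    Tendsto (fun i ↦ ⨍ y in s i, f y ∂μ) l (𝓝 (f x)) := by
  have hsmall := (hf.integral_sub_linear_isLittleO_ae hfm hs).tendsto_inv_smul_nhds_zero
  refine tendsto_sub_nhds_zero_iff.1 (hsmall.congr' ?_)
  filter_upwards [hs₀, hs.eventually (μ.finiteAt_nhds x).eventually] with i hi hfin
  have hreal : μ.real (s i) ≠ 0 := ENNReal.toReal_ne_zero.2 ⟨hi, hfin.ne⟩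
  rw [smul_sub, inv_smul_smul₀ hreal, setAverage_eq]

theorem tendsto_setAverage_closedBall {X E : Type*} [PseudoMetricSpace X] [MeasurableSpace X]
    [OpensMeasurableSpace X] [NormedAddCommGroup E] [NormedSpace ℝ E] [CompleteSpace E]
    {μ : Measure X} [IsLocallyFiniteMeasure μ] [μ.IsOpenPosMeasure] {x : X} {f : X → E}
    (hf : ContinuousAt f x) (hfm : StronglyMeasurableAtFilter f (𝓝 x) μ) :
    Tendsto (fun r ↦ ⨍ y in closedBall x r, f y ∂μ) (𝓝[>] 0) (𝓝 (f x)) :=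
  hf.tendsto_setAverage hfm ((tendsto_closedBall_smallSets x).mono_left nhdsWithin_le_nhds)
    (eventually_nhdsWithin_of_forall fun _ hr ↦ (measure_closedBall_pos μ x hr).ne')

theorem abc_model_weight_tendsto_posterior_general
    (M d : ℕ)
    (g : Fin M → EuclideanSpace ℝ (Fin d) → ℝ)
    (hg_meas : ∀ i, Measurable (g i))
    (p : Fin M → ℝ)
    (s₀ : EuclideanSpace ℝ (Fin d)) (hg_cont : ∀ i, ContinuousAt (g i) s₀)
    (hpos : 0 < ∑ j, p j * g j s₀) (i : Fin M) :
    Filter.Tendsto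
      (fun h : ℝ =>
        p i * (∫ s in Metric.closedBall s₀ h, g i s) /
          ∑ j, p j * ∫ s in Metric.closedBall s₀ h, g j s)
      (nhdsWithin 0 (Set.Ioi 0))
      (nhds (p i * g i s₀ / ∑ j, p j * g j s₀)) := by
  have havg : ∀ j, Tendsto (fun h ↦ ⨍ s in closedBall s₀ h, g j s) (𝓝[>] 0) (𝓝 (g j s₀)) :=
    fun j ↦ tendsto_setAverage_closedBall (hg_cont j)
      (hg_meas j).stronglyMeasurable.stronglyMeasurableAtFilter
  refine ((havg i).const_mul (p i)).div
    (tendsto_finsetSum _ fun j _ ↦ (havg j).const_mul (p j)) hpos.ne' |>.congr' ?_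
  filter_upwards [self_mem_nhdsWithin] with h hh
  have hV : volume.real (closedBall s₀ h) ≠ 0 :=
    ENNReal.toReal_ne_zero.2 ⟨(measure_closedBall_pos _ s₀ hh).ne', measure_closedBall_lt_top.ne⟩
  simp only [Pi.div_apply, setAverage_eq, smul_eq_mul, mul_left_comm (p _), ← Finset.mul_sum,
    mul_div_mul_left _ _ (inv_ne_zero hV)]

/-- **Convergence of ABC posterior model weights as `h → 0⁺`.** If under each model the
summary statistic has a density `g i` on `ℝ^d` continuous at the observed value `s₀`, and
the prior satisfies `∑ j, p j * g j s₀ > 0`, then the ABC posterior model weight computed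
with acceptance ball `B(s₀, h)` converges, as `h → 0⁺`, to the exact posterior model
probability `p i * g i s₀ / ∑ j, p j * g j s₀`. -/
theorem abc_model_weight_tendsto_posterior
    (M d : ℕ) (hM : 2 ≤ M) (hd : 1 ≤ d)
    (g : Fin M → EuclideanSpace ℝ (Fin d) → ℝ)
    (hg_meas : ∀ i, Measurable (g i)) (hg_nonneg : ∀ i s, 0 ≤ g i s)
    (hg_one : ∀ i, ∫ s, g i s = 1)
    (p : Fin M → ℝ) (hp_nonneg : ∀ i, 0 ≤ p i) (hp_one : ∑ i, p i = 1)
    (s₀ : EuclideanSpace ℝ (Fin d)) (hg_cont : ∀ i, ContinuousAt (g i) s₀)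
    (hpos : 0 < ∑ j, p j * g j s₀) (i : Fin M) :
    Filter.Tendsto
      (fun h : ℝ =>
        p i * (∫ s in Metric.closedBall s₀ h, g i s) /
          ∑ j, p j * ∫ s in Metric.closedBall s₀ h, g j s)
      (nhdsWithin 0 (Set.Ioi 0))
      (nhds (p i * g i s₀ / ∑ j, p j * g j s₀)) :=
  abc_model_weight_tendsto_posterior_general M d g hg_meas p s₀ hg_cont hpos i
end
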